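/- arXiv:1404.3228 — 3 statements merged into one kernel-verified Lean document; each statement's English description precedes it below -/
import Mathlib

section
/- The map ψ : 𝕊 → 𝕊̄ defined by ψ(0) = (0,0,0,…) and ψ((k,a)) = (∞,…,∞, a, 0, 0, …) (with ∞ in positions 0,…,k−1 and a in position k) is a homeomorphism from 𝕊 with the order topology onto 𝕊̄ with the subspace topology inherited from the product topology on [0,∞]^ℕ₀. -/
open scoped ENNReal

/-- The parameter space `𝕊 = {0} ∪ (ℕ₀ × (0,∞])`, realized as a subtype of the
lexicographic product `ℕ ×ₗ ℝ≥0∞`: the pair `(0,0)` represents `0 ∈ 𝕊`, and the pairs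
`(i,t)` with `t > 0` represent the elements of `ℕ₀ × (0,∞]`.  The induced subtype
order is exactly the order of the paper: `0` is the least element, and
`(i,t) < (j,s)` iff `i < j`, or `i = j` and `t < s`. -/
abbrev Sp : Type :=
  {p : ℕ ×ₗ ℝ≥0∞ // ((ofLex p).1 = 0 ∧ (ofLex p).2 = 0) ∨ 0 < (ofLex p).2}

/-- The zero element of `𝕊`. -/
def sZero : Sp := ⟨toLex (0, 0), Or.inl ⟨rfl, rfl⟩⟩

/-- The element `(i,t)` of `𝕊`, for a level `i ∈ ℕ₀` and real part `t ∈ (0,∞]`. -/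
def sNode (i : ℕ) (t : ℝ≥0∞) (ht : 0 < t) : Sp := ⟨toLex (i, t), Or.inr ht⟩

/-- The level `ℒ(x)` of an element of `𝕊` (conventionally `0` on the zero element). -/
def sLevel (x : Sp) : ℕ := (ofLex x.val).1

/-- The real part `ℛ(x)` of an element of `𝕊` (equal to `0` exactly on the zero element). -/
def sRe (x : Sp) : ℝ≥0∞ := (ofLex x.val).2

theorem sNode_ne_sZero {i : ℕ} {t : ℝ≥0∞} (ht : 0 < t) : sNode i t ht ≠ sZero :=
  fun h => ht.ne' (congrArg sRe h)

/-- `𝕊` carries the order topology. -/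
instance : TopologicalSpace Sp := Preorder.topology Sp

instance : OrderTopology Sp := ⟨rfl⟩

/-- The map `ψ : 𝕊 → [0,∞]^ℕ₀`, sending `0` to the zero sequence and `(k,a)` to the
sequence with `∞` in positions `0,…,k−1`, `a` in position `k`, and `0` afterwards. -/
noncomputable def sPsi (x : Sp) : ℕ → ℝ≥0∞ := fun i =>
  if sRe x = 0 then 0
  else if i < sLevel x then ∞
  else if i = sLevel x then sRe x
  else 0

/-- The set `𝕊̄ ⊆ [0,∞]^ℕ₀` of sequences which are either identically `0`, or equal
to `∞` before some index `k`, positive at `k`, and `0` after `k`. -/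
def sBar : Set (ℕ → ℝ≥0∞) :=
  {x | (∀ i, x i = 0) ∨
    ∃ k : ℕ, (∀ i < k, x i = ∞) ∧ 0 < x k ∧ ∀ i > k, x i = 0}

/-!
For `y = (k,a)` the open rays of `𝕊` at `y` are preimages under `ψ` of coordinate half-lines:
`y < x ↔ a < ψ(x)ₖ` if `a < ∞`, `y < x ↔ 0 < ψ(x)ₖ₊₁` if `a = ∞`, and `x < y ↔ ψ(x)ₖ < a`
(also for `y = 0 = (0,0)`). Read backwards, every subbasic open set `{ψ(x)ᵢ > c}` or
`{ψ(x)ᵢ < c}` of the product topology pulls back to such a ray or to `∅`. So `ψ` is continuous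
and induces the order topology; as `𝕊` is T₀ it is an embedding, and its range is `𝕊̄`.
-/

open Set Topology

lemma sLevel_eq_zero_of_sRe_eq_zero {x : Sp} (h : sRe x = 0) : sLevel x = 0 :=
  (x.property.resolve_right h.not_gt).1

lemma lt_iff_sLevel_sRe {x y : Sp} :
    x < y ↔ sLevel x < sLevel y ∨ sLevel x = sLevel y ∧ sRe x < sRe y :=
  Prod.Lex.lt_iff ..

lemma lt_iff_sRe_lt_sPsi {x y : Sp} (hy : sRe y ≠ ∞) : y < x ↔ sRe y < sPsi x (sLevel y) := by
  rw [lt_iff_sLevel_sRe, sPsi]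
  split_ifs <;>
    grind [ENNReal.not_lt_zero, not_top_lt, lt_top_iff_ne_top, pos_iff_ne_zero,
      sLevel_eq_zero_of_sRe_eq_zero]

lemma lt_iff_pos_sPsi_succ {x y : Sp} (hy : sRe y = ∞) : y < x ↔ 0 < sPsi x (sLevel y + 1) := by
  rw [lt_iff_sLevel_sRe, sPsi, hy]
  split_ifs <;>
    grind [ENNReal.not_lt_zero, not_top_lt, lt_top_iff_ne_top, pos_iff_ne_zero,
      sLevel_eq_zero_of_sRe_eq_zero]

lemma lt_iff_sPsi_lt_sRe {x y : Sp} : x < y ↔ sPsi x (sLevel y) < sRe y := by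
  rw [lt_iff_sLevel_sRe, sPsi]
  split_ifs <;>
    grind [ENNReal.not_lt_zero, not_top_lt, lt_top_iff_ne_top, pos_iff_ne_zero,
      sLevel_eq_zero_of_sRe_eq_zero]

lemma isOpen_preimage_sPsi_apply_Ioi (i : ℕ) (c : ℝ≥0∞) :
    IsOpen ((sPsi · i) ⁻¹' Ioi c) := by
  obtain rfl | hc := eq_or_ne c ∞
  · simp
  obtain rfl | hc0 := eq_or_ne c 0
  · cases i with
    | zero =>
      convert isOpen_Ioi (a := sZero) using 1
      exact ext fun x => (lt_iff_sRe_lt_sPsi (y := sZero) ENNReal.zero_ne_top).symm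
    | succ j =>
      convert isOpen_Ioi (a := sNode j ∞ ENNReal.zero_lt_top) using 1
      exact ext fun x => (lt_iff_pos_sPsi_succ (y := sNode j ∞ _) rfl).symm
  · convert isOpen_Ioi (a := sNode i c (pos_iff_ne_zero.2 hc0)) using 1
    exact ext fun x => (lt_iff_sRe_lt_sPsi (y := sNode i c _) hc).symm

lemma isOpen_preimage_sPsi_apply_Iio (i : ℕ) (c : ℝ≥0∞) :
    IsOpen ((sPsi · i) ⁻¹' Iio c) := by
  obtain rfl | hc0 := eq_or_ne c 0
  · simp
  · convert isOpen_Iio (a := sNode i c (pos_iff_ne_zero.2 hc0)) using 1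
    exact ext fun x => (lt_iff_sPsi_lt_sRe (y := sNode i c _)).symm

lemma continuous_sPsi : Continuous sPsi :=
  continuous_pi fun i => OrderTopology.continuous_iff.2 fun c =>
    ⟨isOpen_preimage_sPsi_apply_Ioi i c, isOpen_preimage_sPsi_apply_Iio i c⟩

lemma isInducing_sPsi : IsInducing sPsi := by
  refine ⟨le_antisymm continuous_sPsi.le_induced ?_⟩
  rw [OrderTopology.topology_eq_generate_intervals (α := Sp)]
  refine le_generateFrom ?_
  rintro _ ⟨y, rfl | rfl⟩ <;> rw [isOpen_induced_iff]
  · obtain hy | hy := eq_or_ne (sRe y) ∞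
    · exact ⟨{s | 0 < s (sLevel y + 1)}, isOpen_lt continuous_const (continuous_apply _),
        ext fun x => (lt_iff_pos_sPsi_succ hy).symm⟩
    · exact ⟨{s | sRe y < s (sLevel y)}, isOpen_lt continuous_const (continuous_apply _),
        ext fun x => (lt_iff_sRe_lt_sPsi hy).symm⟩
  · exact ⟨{s | s (sLevel y) < sRe y}, isOpen_lt (continuous_apply _) continuous_const,
      ext fun x => lt_iff_sPsi_lt_sRe.symm⟩

lemma sPsi_mem_sBar (x : Sp) : sPsi x ∈ sBar := by
  by_cases h0 : sRe x = 0
  · exact Or.inl fun i => by simp [sPsi, h0]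
  · refine Or.inr ⟨sLevel x, fun i hi => ?_, ?_, fun i hi => ?_⟩
    · simp [sPsi, h0, hi]
    · simp [sPsi, h0, pos_iff_ne_zero]
    · simp [sPsi, h0, hi.ne', hi.not_gt]

lemma range_sPsi : range sPsi = sBar := by
  refine (range_subset_iff.2 sPsi_mem_sBar).antisymm ?_
  rintro s (hs | ⟨k, hlt, hpos, hgt⟩)
  · exact ⟨sZero, funext fun i => by simp [sPsi, sRe, sZero, hs i]⟩
  · refine ⟨sNode k (s k) hpos, funext fun i => ?_⟩
    simp only [sPsi, sRe, sLevel, sNode, ofLex_toLex, hpos.ne', if_false]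
    rcases lt_trichotomy i k with hi | rfl | hi
    · simp [hi, hlt i hi]
    · simp
    · simp [hi.ne', hi.not_gt, hgt i hi]

/-- `ψ` is a homeomorphism from `𝕊` with the order topology onto `𝕊̄` with the
subspace topology inherited from the product topology on `[0,∞]^ℕ₀`. -/
theorem stmt9 :
    ∃ e : Sp ≃ₜ sBar, ∀ x : Sp, (e x : ℕ → ℝ≥0∞) = sPsi x :=
  ⟨isInducing_sPsi.isEmbedding.toHomeomorph.trans (Homeomorph.setCongr range_sPsi),
    fun _ => rfl⟩
end

section
/- The projectivization ℙ𝕊² of 𝕊² is not a Hausdorff topological space. -/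
open scoped ENNReal

/-- Scalar multiplication by an extended real `λ`: `λ·(i,t) = (i, λ·t)` and `λ·0 = 0`
(intended for positive scalars `λ ∈ (0,∞]`). -/
noncomputable def sSMul (l : ℝ≥0∞) (x : Sp) : Sp :=
  if hx : sRe x = 0 then sZero
  else if hl : l = 0 then sZero
  else sNode (sLevel x) (l * sRe x) (ENNReal.mul_pos hl hx)

/-- `𝕊² ∖ {(0,0)}`. -/
abbrev SV2 : Type := {v : Sp × Sp // v ≠ (sZero, sZero)}

/-- Projective equivalence on `𝕊² ∖ {(0,0)}`: `w = λ·v` coordinatewise for some real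
`λ ∈ (0,∞)` (i.e. some positive finite extended real). -/
def projRel2 (v w : SV2) : Prop :=
  ∃ l : ℝ≥0∞, 0 < l ∧ l ≠ ∞ ∧
    w.val.1 = sSMul l v.val.1 ∧ w.val.2 = sSMul l v.val.2

/-- The projectivization `ℙ𝕊²`, with the quotient topology. -/
abbrev PS2 : Type := Quot projRel2

/-- The point `((i,s),(j,t))` of `𝕊² ∖ {(0,0)}`. -/
def pt2 (i j : ℕ) (s t : ℝ≥0∞) (hs : 0 < s) (ht : 0 < t) : SV2 :=
  ⟨(sNode i s hs, sNode j t ht), fun h => sNode_ne_sZero hs (congrArg Prod.fst h)⟩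

/-!
The class of `((0,1),(0,1))` contains every `((0,n+1),(0,n+1))`, and these converge in `𝕊²` to
`((0,∞),(0,∞))`. Hence the constant sequence at the class of `((0,1),(0,1))` converges in `ℙ𝕊²`
to the class of `((0,∞),(0,∞))`, which is a different point since scaling by a finite `λ > 0`
preserves real part `∞`. Limits in a Hausdorff space are unique.
-/

open Filter Topology

lemma sSMul_sNode {l : ℝ≥0∞} (hl : l ≠ 0) (i : ℕ) {t : ℝ≥0∞} (ht : 0 < t) :
    sSMul l (sNode i t ht) = sNode i (l * t) (ENNReal.mul_pos hl ht.ne') := by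
  unfold sSMul
  rw [dif_neg (show sRe (sNode i t ht) ≠ 0 from ht.ne'), dif_neg hl]
  rfl

lemma projRel2_pt2_smul (i j : ℕ) {s t l : ℝ≥0∞} (hs : 0 < s) (ht : 0 < t) (hl : 0 < l)
    (hl' : l ≠ ∞) :
    projRel2 (pt2 i j s t hs ht)
      (pt2 i j (l * s) (l * t) (ENNReal.mul_pos hl.ne' hs.ne') (ENNReal.mul_pos hl.ne' ht.ne')) :=
  ⟨l, hl, hl', (sSMul_sNode hl.ne' i hs).symm, (sSMul_sNode hl.ne' j ht).symm⟩

lemma sRe_sSMul_eq_top_iff {l : ℝ≥0∞} (hl : 0 < l) (hl' : l ≠ ∞) (x : Sp) :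
    sRe (sSMul l x) = ∞ ↔ sRe x = ∞ := by
  unfold sSMul
  split_ifs with hx hl0
  · rw [hx]
    simp [sZero, sRe]
  · exact absurd hl0 hl.ne'
  · simp [sRe, sNode, ENNReal.mul_eq_top, hl', hl0]

lemma projRel2.sRe_fst_eq_top_iff {v w : SV2} (h : projRel2 v w) :
    sRe v.val.1 = ∞ ↔ sRe w.val.1 = ∞ := by
  obtain ⟨l, hl, hl', h1, -⟩ := h
  rw [h1, sRe_sSMul_eq_top_iff hl hl']

lemma tendsto_sNode_top (i : ℕ) {u : ℕ → ℝ≥0∞} (hpos : ∀ n, 0 < u n)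
    (hu : Tendsto u atTop (𝓝 ∞)) :
    Tendsto (fun n => sNode i (u n) (hpos n)) atTop (𝓝 (sNode i ∞ ENNReal.zero_lt_top)) := by
  refine tendsto_order.2 ⟨fun a ha => ?_, fun b hb => ?_⟩
  · rcases Prod.Lex.lt_iff.1 ha with hlt | ⟨hEq, hre⟩
    · exact Eventually.of_forall fun n => Prod.Lex.lt_iff.2 (Or.inl hlt)
    · filter_upwards [(tendsto_order.1 hu).1 _ hre] with n hn
      exact Prod.Lex.lt_iff.2 (Or.inr ⟨hEq, hn⟩)
  · rcases Prod.Lex.lt_iff.1 hb with hlt | ⟨-, hre⟩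
    · exact Eventually.of_forall fun n => Prod.Lex.lt_iff.2 (Or.inl hlt)
    · exact absurd hre not_top_lt

lemma tendsto_pt2_diag_top (i j : ℕ) {u : ℕ → ℝ≥0∞} (hpos : ∀ n, 0 < u n)
    (hu : Tendsto u atTop (𝓝 ∞)) :
    Tendsto (fun n => pt2 i j (u n) (u n) (hpos n) (hpos n)) atTop
      (𝓝 (pt2 i j ∞ ∞ ENNReal.zero_lt_top ENNReal.zero_lt_top)) :=
  tendsto_subtype_rng.2 <|
    (tendsto_sNode_top i hpos hu).prodMk_nhds (tendsto_sNode_top j hpos hu)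

/-- The projectivization `ℙ𝕊²` of `𝕊²` is not a Hausdorff topological space. -/
theorem stmt12 : ¬ T2Space PS2 := by
  intro _
  have hpos (n : ℕ) : (0 : ℝ≥0∞) < n + 1 := by positivity
  have hu : Tendsto (fun n : ℕ => (n : ℝ≥0∞) + 1) atTop (𝓝 ∞) := by
    exact_mod_cast ENNReal.tendsto_nat_nhds_top.comp (tendsto_add_atTop_nat 1)
  let one : SV2 := pt2 0 0 1 1 one_pos one_pos
  let top : SV2 := pt2 0 0 ∞ ∞ ENNReal.zero_lt_top ENNReal.zero_lt_top
  have hclass (n : ℕ) : Quot.mk projRel2 (pt2 0 0 (n + 1) (n + 1) (hpos n) (hpos n)) =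
      Quot.mk projRel2 one := by
    refine (Quot.sound ?_).symm
    simpa using projRel2_pt2_smul 0 0 one_pos one_pos (hpos n) (by simp)
  have hlim : Tendsto (fun _ : ℕ => Quot.mk projRel2 one) atTop (𝓝 (Quot.mk projRel2 top)) :=
    ((continuous_quot_mk.tendsto _).comp (tendsto_pt2_diag_top 0 0 hpos hu)).congr hclass
  have hne : Quot.mk projRel2 one ≠ Quot.mk projRel2 top := fun h => by
    simpa [one, top, pt2, sNode, sRe] using
      congrArg (Quot.lift (fun v : SV2 => sRe v.val.1 = ∞)
        fun _ _ h => propext h.sRe_fst_eq_top_iff) h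
  exact hne (tendsto_nhds_unique tendsto_const_nhds hlim)
end

section
/- In the projectivization ℙ𝕊³ of 𝕊³, the classes of the weight vectors w₁ = ((0,1),(0,∞),(0,1)) and w₂ = (0,(0,1),0) are distinct, the sequence of classes [((0,1),(0,r),(0,1))] converges both to [w₁] and to [w₂] as r → ∞, and hence [w₁] and [w₂] cannot be separated by disjoint open sets; in particular ℙ𝕊³ is not Hausdorff. -/
open scoped ENNReal

/-- `𝕊³` minus the zero vector. -/
abbrev SV3 : Type := {v : Sp × Sp × Sp // v ≠ (sZero, sZero, sZero)}

/-- Projective equivalence on `𝕊³` minus the zero vector: `w = λ·v` coordinatewise for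
some real `λ ∈ (0,∞)` (i.e. some positive finite extended real). -/
def projRel3 (v w : SV3) : Prop :=
  ∃ l : ℝ≥0∞, 0 < l ∧ l ≠ ∞ ∧
    w.val.1 = sSMul l v.val.1 ∧ w.val.2.1 = sSMul l v.val.2.1 ∧
    w.val.2.2 = sSMul l v.val.2.2

/-- The projectivization `ℙ𝕊³`, with the quotient topology. -/
abbrev PS3 : Type := Quot projRel3

/-- The weight vector `w₁ = ((0,1),(0,∞),(0,1))`. -/
noncomputable def w1 : SV3 :=
  ⟨(sNode 0 1 zero_lt_one, sNode 0 ∞ (by simp), sNode 0 1 zero_lt_one),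
    fun h => sNode_ne_sZero zero_lt_one (congrArg Prod.fst h)⟩

/-- The weight vector `w₂ = (0,(0,1),0)`. -/
noncomputable def w2 : SV3 :=
  ⟨(sZero, sNode 0 1 zero_lt_one, sZero),
    fun h => sNode_ne_sZero zero_lt_one (congrArg (fun v => v.2.1) h)⟩

/-- The weight vector `((0,1),(0,r),(0,1))` for `r ∈ (0,∞)`. -/
noncomputable def wr (r : ℝ≥0∞) (hr : 0 < r) : SV3 :=
  ⟨(sNode 0 1 zero_lt_one, sNode 0 r hr, sNode 0 1 zero_lt_one),
    fun h => sNode_ne_sZero zero_lt_one (congrArg Prod.fst h)⟩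

/-!
Since the level-`0` part of `𝕊` is an initial segment order-isomorphic to `[0,∞]` (with `(0,0)`
being the zero of `𝕊`), the map `t ↦ (0,t)` is continuous. Hence `[(1, n+1, 1)] → [w₁]`, while
rescaling by `(n+1)⁻¹` gives the same classes as `((n+1)⁻¹, 1, (n+1)⁻¹) → w₂`. The two limits
differ because vanishing of the first coordinate is a projective invariant.
-/

open Filter Topology

lemma Filter.Tendsto.inter_nonempty_of_mem_nhds {X ι : Type*} [TopologicalSpace X]
    {l : Filter ι} [l.NeBot] {u : ι → X} {a b : X} (ha : Tendsto u l (𝓝 a))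
    (hb : Tendsto u l (𝓝 b)) {U V : Set X} (hU : U ∈ 𝓝 a) (hV : V ∈ 𝓝 b) :
    (U ∩ V).Nonempty :=
  let ⟨i, hi⟩ := ((ha.eventually_mem hU).and (hb.eventually_mem hV)).exists
  ⟨u i, hi⟩

def levelZero (t : ℝ≥0∞) : Sp := ⟨toLex (0, t), (eq_zero_or_pos t).imp (fun h => ⟨rfl, h⟩) id⟩

lemma strictMono_levelZero : StrictMono levelZero := fun _ _ h =>
  Subtype.coe_lt_coe.1 (Prod.Lex.toLex_strictMono (Prod.mk_lt_mk_iff_right.2 h))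

lemma levelZero_eq_sZero_iff {t : ℝ≥0∞} : levelZero t = sZero ↔ t = 0 :=
  strictMono_levelZero.injective.eq_iff' rfl

lemma ordConnected_range_levelZero : (Set.range levelZero).OrdConnected := by
  refine ⟨?_⟩
  rintro _ - _ ⟨b, rfl⟩ ⟨⟨i, t⟩, _⟩ ⟨-, hz⟩
  obtain rfl : i = 0 := Nat.le_zero.1 (Prod.Lex.monotone_fst_ofLex (Subtype.coe_le_coe.2 hz))
  exact ⟨t, rfl⟩

lemma continuous_levelZero : Continuous levelZero :=
  (strictMono_levelZero.isEmbedding_of_ordConnected ordConnected_range_levelZero).continuous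

lemma sSMul_levelZero {l : ℝ≥0∞} (hl : l ≠ 0) (t : ℝ≥0∞) :
    sSMul l (levelZero t) = levelZero (l * t) := by
  unfold sSMul
  split_ifs with ht
  · obtain rfl : t = 0 := ht
    rw [mul_zero]
    rfl
  · rfl

def levelZeroVec (t : ℝ≥0∞ × ℝ≥0∞ × ℝ≥0∞) (ht : t ≠ 0) : SV3 :=
  ⟨(levelZero t.1, levelZero t.2.1, levelZero t.2.2), fun h => ht <| by
    simp only [Prod.mk.injEq, levelZero_eq_sZero_iff] at h
    exact Prod.ext h.1 (Prod.ext h.2.1 h.2.2)⟩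

lemma projRel3_levelZeroVec {l : ℝ≥0∞} (hl₀ : l ≠ 0) (hl : l ≠ ∞)
    {t s : ℝ≥0∞ × ℝ≥0∞ × ℝ≥0∞} (ht : t ≠ 0) (hs : s ≠ 0) (hst : s = l • t) :
    projRel3 (levelZeroVec t ht) (levelZeroVec s hs) := by
  subst hst
  exact ⟨l, pos_iff_ne_zero.2 hl₀, hl, (sSMul_levelZero hl₀ _).symm,
    (sSMul_levelZero hl₀ _).symm, (sSMul_levelZero hl₀ _).symm⟩

lemma tendsto_mk_levelZeroVec {ι : Type*} {l : Filter ι} {f : ι → ℝ≥0∞ × ℝ≥0∞ × ℝ≥0∞}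
    (hf : ∀ i, f i ≠ 0) {t : ℝ≥0∞ × ℝ≥0∞ × ℝ≥0∞} (ht : t ≠ 0) (h : Tendsto f l (𝓝 t)) :
    Tendsto (fun i => Quot.mk projRel3 (levelZeroVec (f i) (hf i))) l
      (𝓝 (Quot.mk projRel3 (levelZeroVec t ht))) :=
  continuous_quot_mk.continuousAt.tendsto.comp <| tendsto_subtype_rng.2 <|
    ((continuous_levelZero.prodMap (continuous_levelZero.prodMap continuous_levelZero)).tendsto
      t).comp h

lemma sRe_sSMul_eq_zero_iff {l : ℝ≥0∞} (hl : l ≠ 0) {x : Sp} :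
    sRe (sSMul l x) = 0 ↔ sRe x = 0 := by
  unfold sSMul
  split_ifs with hx
  · exact iff_of_true rfl hx
  · exact iff_of_false (ENNReal.mul_pos hl hx).ne' hx

def firstCoordZero : PS3 → Prop :=
  Quot.lift (fun v => sRe v.val.1 = 0) fun _ _ ⟨_, hl, _, h, _⟩ =>
    propext (by rw [h, sRe_sSMul_eq_zero_iff hl.ne'])

lemma tendsto_natCast_add_one_nhds_top :
    Tendsto (fun n : ℕ => (n : ℝ≥0∞) + 1) atTop (𝓝 ∞) := by
  simpa [Function.comp_def] using ENNReal.tendsto_nat_nhds_top.comp (tendsto_add_atTop_nat 1)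

lemma tendsto_inv_natCast_add_one_nhds_zero :
    Tendsto (fun n : ℕ => ((n : ℝ≥0∞) + 1)⁻¹) atTop (𝓝 0) := by
  simpa [Function.comp_def] using
    ENNReal.tendsto_inv_nat_nhds_zero.comp (tendsto_add_atTop_nat 1)

/-- In `ℙ𝕊³`, the classes of `w₁ = ((0,1),(0,∞),(0,1))` and `w₂ = (0,(0,1),0)` are
distinct, the sequence of classes `[((0,1),(0,r),(0,1))]` converges to both `[w₁]`
and `[w₂]` as `r → ∞`, hence `[w₁]` and `[w₂]` cannot be separated by disjoint open
sets; in particular `ℙ𝕊³` is not Hausdorff. -/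
theorem stmt15 :
    Quot.mk projRel3 w1 ≠ Quot.mk projRel3 w2 ∧
    Filter.Tendsto
      (fun n : ℕ => Quot.mk projRel3 (wr ((n : ℝ≥0∞) + 1) (lt_of_lt_of_le zero_lt_one le_add_self)))
      Filter.atTop (nhds (Quot.mk projRel3 w1)) ∧
    Filter.Tendsto
      (fun n : ℕ => Quot.mk projRel3 (wr ((n : ℝ≥0∞) + 1) (lt_of_lt_of_le zero_lt_one le_add_self)))
      Filter.atTop (nhds (Quot.mk projRel3 w2)) ∧
    (∀ U V : Set PS3, IsOpen U → IsOpen V →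
      Quot.mk projRel3 w1 ∈ U → Quot.mk projRel3 w2 ∈ V → (U ∩ V).Nonempty) ∧
    ¬ T2Space PS3 := by
  set u : ℕ → PS3 := fun n =>
    Quot.mk projRel3 (wr ((n : ℝ≥0∞) + 1) (lt_of_lt_of_le zero_lt_one le_add_self))
  have hne : Quot.mk projRel3 w1 ≠ Quot.mk projRel3 w2 := fun h =>
    one_ne_zero ((congrArg firstCoordZero h).mpr rfl)
  have hu₁ : Tendsto u atTop (𝓝 (Quot.mk projRel3 w1)) :=
    tendsto_mk_levelZeroVec (f := fun n : ℕ => (1, (n : ℝ≥0∞) + 1, 1)) (by simp) (by simp)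
      (tendsto_const_nhds.prodMk_nhds
        (tendsto_natCast_add_one_nhds_top.prodMk_nhds tendsto_const_nhds))
  -- rescaling by `(n+1)⁻¹` represents `u n` by `((n+1)⁻¹, 1, (n+1)⁻¹)`, which tends to `w₂`
  have hrescale : ∀ n : ℕ, u n = Quot.mk projRel3
      (levelZeroVec (((n : ℝ≥0∞) + 1)⁻¹, 1, ((n : ℝ≥0∞) + 1)⁻¹) (by simp)) := fun n =>
    Quot.sound <| projRel3_levelZeroVec (l := ((n : ℝ≥0∞) + 1)⁻¹) (by simp) (by simp)
      (t := (1, (n : ℝ≥0∞) + 1, 1)) (by simp) (by simp) <| by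
        simp [ENNReal.inv_mul_cancel]
  have hu₂ : Tendsto u atTop (𝓝 (Quot.mk projRel3 w2)) := by
    rw [funext hrescale]
    exact tendsto_mk_levelZeroVec _ (by simp) (tendsto_inv_natCast_add_one_nhds_zero.prodMk_nhds
      (tendsto_const_nhds.prodMk_nhds tendsto_inv_natCast_add_one_nhds_zero))
  have hinter : ∀ U V : Set PS3, IsOpen U → IsOpen V →
      Quot.mk projRel3 w1 ∈ U → Quot.mk projRel3 w2 ∈ V → (U ∩ V).Nonempty :=
    fun U V hU hV h₁ h₂ => hu₁.inter_nonempty_of_mem_nhds hu₂ (hU.mem_nhds h₁) (hV.mem_nhds h₂)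
  exact ⟨hne, hu₁, hu₂, hinter, fun _ => hne (tendsto_nhds_unique hu₁ hu₂)⟩
end
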